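/- arXiv:2301.11147 — 3 statements merged into one kernel-verified Lean document; each statement's English description precedes it below -/
import Mathlib

section
/- CVaR policy gradient in RL with the quantile baseline: let f : ℝ → ℝ → ℝ, q : ℝ → ℝ, θ₀ ∈ ℝ, α ∈ ℝ, q₀ = q(θ₀), and let F(x) be the pointwise θ-derivative of f(θ,x) at θ₀. Define G(θ,c) = ∫_{-∞}^{c} f(θ,x) dx and H(θ,c) = ∫_{-∞}^{c} x·f(θ,x) dx. Assume: (i) q has derivative q'(θ₀) at θ₀; (ii) G is Fréchet differentiable at (θ₀,q₀) with ∂_θ G = ∫_{-∞}^{q₀} F(x) dx and ∂_c G = f(θ₀,q₀), with F integrable on (-∞,q₀]; (iii) G(θ, q(θ)) = α for all θ in a neighborhood of θ₀; (iv) H is Fréchet differentiable at (θ₀,q₀) with ∂_θ H = ∫_{-∞}^{q₀} x·F(x) dx and ∂_c H = q₀·f(θ₀,q₀), with x ↦ x·F(x) integrable on (-∞,q₀]. Then the function θ ↦ ∫_{-∞}^{q(θ)} x·f(θ,x) dx has derivative ∫_{-∞}^{q₀} (x − q₀)·F(x) dx at θ₀. -/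
open MeasureTheory

/-!
Evaluate `G` and `H` along the curve `φ θ = (θ, q θ)`. By the chain rule,
`(H ∘ φ)'(θ₀) = ∫ x F + q₀ f(θ₀, q₀) q'`, while the conservation rule `G ∘ φ ≡ α` gives
`∫ F + f(θ₀, q₀) q' = 0`. Eliminating the unknown boundary term `f(θ₀, q₀) q'` leaves
`∫ x F - q₀ ∫ F = ∫ (x - q₀) F`: the quantile baseline exactly cancels the moving boundary.
-/

section Curve

variable {𝕜 : Type*} [NontriviallyNormedField 𝕜]

theorem HasFDerivAt.hasDerivAt_comp_graph {g : 𝕜 × 𝕜 → 𝕜} {c : 𝕜 → 𝕜} {a b c' x : 𝕜}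
    (hg : HasFDerivAt g (a • ContinuousLinearMap.fst 𝕜 𝕜 𝕜 + b • ContinuousLinearMap.snd 𝕜 𝕜 𝕜)
      (x, c x))
    (hc : HasDerivAt c c' x) :
    HasDerivAt (fun t => g (t, c t)) (a + b * c') x := by
  have h := hg.comp_hasDerivAt x ((hasDerivAt_id x).prodMk hc)
  simp only [add_apply, smul_apply,
    ContinuousLinearMap.coe_fst', ContinuousLinearMap.coe_snd', smul_eq_mul, mul_one] at h
  exact h

theorem HasFDerivAt.add_mul_eq_zero_of_eventually_const_comp_graph {g : 𝕜 × 𝕜 → 𝕜}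
    {c : 𝕜 → 𝕜} {a b c' x k : 𝕜}
    (hg : HasFDerivAt g (a • ContinuousLinearMap.fst 𝕜 𝕜 𝕜 + b • ContinuousLinearMap.snd 𝕜 𝕜 𝕜)
      (x, c x))
    (hc : HasDerivAt c c' x) (hconst : ∀ᶠ t in nhds x, g (t, c t) = k) :
    a + b * c' = 0 :=
  (hg.hasDerivAt_comp_graph hc).unique ((hasDerivAt_const x k).congr_of_eventuallyEq hconst)

end Curve

theorem integral_sub_const_mul {α : Type*} [MeasurableSpace α] {μ : Measure α}
    {X F : α → ℝ} (c : ℝ) (hXF : Integrable (fun x => X x * F x) μ) (hF : Integrable F μ) :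
    ∫ x, (X x - c) * F x ∂μ = ∫ x, X x * F x ∂μ - c * ∫ x, F x ∂μ := by
  rw [← integral_const_mul, ← integral_sub hXF (hF.const_mul c)]
  simp only [sub_mul]

theorem cvar_pg_quantile_baseline_general (f : ℝ → ℝ → ℝ) (q : ℝ → ℝ) (θ₀ α q' : ℝ) (F : ℝ → ℝ)
    (hq : HasDerivAt q q' θ₀)
    (hFint : IntegrableOn F (Set.Iic (q θ₀)))
    (hG : HasFDerivAt (fun p : ℝ × ℝ => ∫ x in Set.Iic p.2, f p.1 x)
      ((∫ x in Set.Iic (q θ₀), F x) • ContinuousLinearMap.fst ℝ ℝ ℝ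
        + (f θ₀ (q θ₀)) • ContinuousLinearMap.snd ℝ ℝ ℝ) (θ₀, q θ₀))
    (hcons : ∀ᶠ θ in nhds θ₀, (∫ x in Set.Iic (q θ), f θ x) = α)
    (hxFint : IntegrableOn (fun x => x * F x) (Set.Iic (q θ₀)))
    (hH : HasFDerivAt (fun p : ℝ × ℝ => ∫ x in Set.Iic p.2, x * f p.1 x)
      ((∫ x in Set.Iic (q θ₀), x * F x) • ContinuousLinearMap.fst ℝ ℝ ℝ
        + (q θ₀ * f θ₀ (q θ₀)) • ContinuousLinearMap.snd ℝ ℝ ℝ) (θ₀, q θ₀)) :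
    HasDerivAt (fun θ => ∫ x in Set.Iic (q θ), x * f θ x)
      (∫ x in Set.Iic (q θ₀), (x - q θ₀) * F x) θ₀ := by
  have hboundary := hG.add_mul_eq_zero_of_eventually_const_comp_graph hq hcons
  refine (hH.hasDerivAt_comp_graph hq).congr_deriv ?_
  rw [integral_sub_const_mul (X := fun x => x) _ hxFint hFint]
  linear_combination q θ₀ * hboundary

/-- CVaR policy gradient in RL with the quantile baseline: under the conservation
rule for the moving quantile `q` and differentiability under the integral sign of
both `G (θ, c) = ∫_{-∞}^c f θ x dx` and `H (θ, c) = ∫_{-∞}^c x * f θ x dx`, the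
CVaR objective `θ ↦ ∫_{-∞}^{q θ} x * f θ x dx` has derivative
`∫_{-∞}^{q₀} (x - q₀) * F x dx` at `θ₀`. -/
theorem cvar_pg_quantile_baseline (f : ℝ → ℝ → ℝ) (q : ℝ → ℝ) (θ₀ α q' : ℝ) (F : ℝ → ℝ)
    (hq : HasDerivAt q q' θ₀)
    (hF : ∀ x, HasDerivAt (fun θ => f θ x) (F x) θ₀)
    (hFint : IntegrableOn F (Set.Iic (q θ₀)))
    (hG : HasFDerivAt (fun p : ℝ × ℝ => ∫ x in Set.Iic p.2, f p.1 x)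
      ((∫ x in Set.Iic (q θ₀), F x) • ContinuousLinearMap.fst ℝ ℝ ℝ
        + (f θ₀ (q θ₀)) • ContinuousLinearMap.snd ℝ ℝ ℝ) (θ₀, q θ₀))
    (hcons : ∀ᶠ θ in nhds θ₀, (∫ x in Set.Iic (q θ), f θ x) = α)
    (hxFint : IntegrableOn (fun x => x * F x) (Set.Iic (q θ₀)))
    (hH : HasFDerivAt (fun p : ℝ × ℝ => ∫ x in Set.Iic p.2, x * f p.1 x)
      ((∫ x in Set.Iic (q θ₀), x * F x) • ContinuousLinearMap.fst ℝ ℝ ℝ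
        + (q θ₀ * f θ₀ (q θ₀)) • ContinuousLinearMap.snd ℝ ℝ ℝ) (θ₀, q θ₀)) :
    HasDerivAt (fun θ => ∫ x in Set.Iic (q θ), x * f θ x)
      (∫ x in Set.Iic (q θ₀), (x - q θ₀) * F x) θ₀ :=
  cvar_pg_quantile_baseline_general f q θ₀ α q' F hq hFint hG hcons hxFint hH
end

section
/- Bias of an arbitrary baseline in RL CVaR policy gradients: under the hypotheses of the conservation identity (f : ℝ → ℝ → ℝ, q : ℝ → ℝ differentiable at θ₀ with derivative q'(θ₀), q₀ = q(θ₀), F the pointwise θ-derivative of f at θ₀ with F and x ↦ x·F(x) integrable on (-∞,q₀], and ∫_{-∞}^{q₀} F(x) dx + f(θ₀,q₀)·q'(θ₀) = 0), for every b ∈ ℝ: ∫_{-∞}^{q₀} (x − b)·F(x) dx = ∫_{-∞}^{q₀} (x − q₀)·F(x) dx − (q₀ − b)·f(θ₀, q₀)·q'(θ₀). -/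
open MeasureTheory

/-- Bias of an arbitrary baseline in RL CVaR policy gradients: under the conservation
identity `∫_{-∞}^{q₀} F + f θ₀ q₀ * q' = 0`, for every baseline `b`,
`∫_{-∞}^{q₀} (x - b) F x dx = ∫_{-∞}^{q₀} (x - q₀) F x dx - (q₀ - b) f(θ₀,q₀) q'`. -/
theorem cvar_pg_baseline_bias (f : ℝ → ℝ → ℝ) (q : ℝ → ℝ) (θ₀ q' : ℝ) (F : ℝ → ℝ)
    (hq : HasDerivAt q q' θ₀)
    (hF : ∀ x, HasDerivAt (fun θ => f θ x) (F x) θ₀)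
    (hFint : IntegrableOn F (Set.Iic (q θ₀)))
    (hxFint : IntegrableOn (fun x => x * F x) (Set.Iic (q θ₀)))
    (hcons : (∫ x in Set.Iic (q θ₀), F x) + f θ₀ (q θ₀) * q' = 0) :
    ∀ b : ℝ, (∫ x in Set.Iic (q θ₀), (x - b) * F x)
      = (∫ x in Set.Iic (q θ₀), (x - q θ₀) * F x) - (q θ₀ - b) * f θ₀ (q θ₀) * q' := by
  intro b
  have key : ∀ c : ℝ, (∫ x in Set.Iic (q θ₀), (x - c) * F x)
      = (∫ x in Set.Iic (q θ₀), x * F x) - c * ∫ x in Set.Iic (q θ₀), F x := by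
    intro c
    have : (fun x => (x - c) * F x) = (fun x => x * F x - c * F x) := by
      funext x; ring
    rw [this, integral_sub hxFint (hFint.const_mul c), MeasureTheory.integral_const_mul]
  have hFval : (∫ x in Set.Iic (q θ₀), F x) = -(f θ₀ (q θ₀) * q') := by linarith
  rw [key b, key (q θ₀), hFval]; ring
end

section
/- Proposition 1 for N i.i.d. samples (variance): let (Ω, μ) be a probability space, A measurable with μ(A) = α and 0 < α ≤ 1, g : Ω → ℝ square-integrable with respect to μ, and N a positive natural number. Let μ_A = μ(·|A) be the conditional probability measure of μ given A. On the product space Ω^N, define Ĝ(ω) = (α·N)⁻¹ · Σ_{i=1}^N 1_A(ω_i)·g(ω_i). Then Var_{(μ_A)^⊗N}(α·Ĝ) ≤ α · Var_{μ^⊗N}(Ĝ), where Var_ν(h) = ∫ h² dν − (∫ h dν)². -/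
/-!
Write `X = 1_A · g` and `m = 𝔼_μ X`, `s = 𝔼_μ X²`. Since `X` vanishes off `A`, conditioning on
`A` multiplies both moments by `α⁻¹`, so `Var_{μ(·|A)} X = α⁻¹ s - α⁻² m²`, whereas
`α⁻¹ Var_μ X = α⁻¹ s - α⁻¹ m²`; as `α = μ A ≤ 1`, the former is the smaller one. The `N` coordinates are
independent under the product measure, so both variances of the batch estimator are the variance
of one summand times `N / (scale)²`, and the scales `N⁻¹` and `(αN)⁻¹` turn the one-sample
inequality into the claimed one.
-/

open MeasureTheory ProbabilityTheory

section

variable {Ω : Type*} [MeasurableSpace Ω] {μ : Measure Ω} {A : Set Ω}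

lemma integral_indicator_cond (hA : MeasurableSet A) (u : Ω → ℝ) :
    ∫ x, A.indicator u x ∂μ[|A] = (μ A).toReal⁻¹ * ∫ x, A.indicator u x ∂μ := by
  rw [ProbabilityTheory.cond, integral_smul_measure, integral_indicator hA, integral_indicator hA,
    Measure.restrict_restrict hA, Set.inter_self, smul_eq_mul, ENNReal.toReal_inv]

lemma MeasureTheory.MemLp.cond {E : Type*} [NormedAddCommGroup E] {f : Ω → E} {p : ENNReal}
    (hf : MemLp f p μ) (hμA : μ A ≠ 0) : MemLp f p μ[|A] :=
  (hf.restrict A).smul_measure (ENNReal.inv_ne_top.2 hμA)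

lemma variance_indicator_cond_le [IsProbabilityMeasure μ] (hA : MeasurableSet A)
    (hμA : μ A ≠ 0) {g : Ω → ℝ} (hg : MemLp g 2 μ) :
    Var[A.indicator g; μ[|A]] ≤ (μ A).toReal⁻¹ * Var[A.indicator g; μ] := by
  have : IsProbabilityMeasure μ[|A] := cond_isProbabilityMeasure hμA
  have hX : MemLp (A.indicator g) 2 μ := hg.indicator hA
  have hXcond : MemLp (A.indicator g) 2 μ[|A] := hX.cond hμA
  have hsq : A.indicator g ^ 2 = A.indicator (g ^ 2) := by
    funext x
    by_cases hx : x ∈ A <;> simp [hx]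
  rw [variance_eq_sub hXcond, variance_eq_sub hX, hsq, integral_indicator_cond hA,
    integral_indicator_cond hA]
  set a := (μ A).toReal
  set m := ∫ x, A.indicator g x ∂μ
  have ha0 : 0 < a := ENNReal.toReal_pos hμA (measure_ne_top μ A)
  have ha1 : 1 ≤ a⁻¹ := (one_le_inv₀ ha0).2 measureReal_le_one
  have hmean : a⁻¹ * m ^ 2 ≤ (a⁻¹ * m) ^ 2 := by
    rw [mul_pow, sq a⁻¹]
    gcongr
    exact le_mul_of_one_le_left (by positivity) ha1
  linarith

end

lemma integral_sq_sub_sq_integral_const_mul_sum_pi {Ω ι : Type*} [MeasurableSpace Ω]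
    [Fintype ι] (κ : Measure Ω) [IsProbabilityMeasure κ] {X : Ω → ℝ} (hX : MemLp X 2 κ)
    (c : ℝ) :
    (∫ ω, (c * ∑ i, X (ω i)) ^ 2 ∂(Measure.pi fun _ : ι => κ))
        - (∫ ω, c * ∑ i, X (ω i) ∂(Measure.pi fun _ : ι => κ)) ^ 2
      = c ^ 2 * Fintype.card ι * Var[X; κ] := by
  have hsum : MemLp (∑ i, fun ω : ι → Ω => X (ω i)) 2 (Measure.pi fun _ => κ) :=
    memLp_finsetSum' _ fun i _ => hX.comp_measurePreserving (measurePreserving_eval _ i)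
  have h := variance_eq_sub (hsum.const_mul c)
  rw [variance_const_mul, variance_sum_pi fun _ => hX] at h
  simp only [Finset.sum_apply, Pi.pow_apply, Finset.sum_const, Finset.card_univ,
    nsmul_eq_mul] at h
  rw [← h, mul_assoc]

theorem tail_sampling_variance_reduction_batch_general {Ω : Type*} [MeasurableSpace Ω]
    (μ : Measure Ω) [IsProbabilityMeasure μ]
    (A : Set Ω) (hA : MeasurableSet A) (α : ℝ) (hα0 : 0 < α)
    (hμA : μ A = ENNReal.ofReal α)
    (g : Ω → ℝ) (hg : MemLp g 2 μ)
    (N : ℕ)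
    (Ghat : (Fin N → Ω) → ℝ)
    (hGhat : ∀ ω, Ghat ω = (α * (N : ℝ))⁻¹ * ∑ i, Set.indicator A g (ω i)) :
    (∫ ω, (α * Ghat ω) ^ 2 ∂(Measure.pi fun _ : Fin N => ProbabilityTheory.cond μ A))
        - (∫ ω, α * Ghat ω ∂(Measure.pi fun _ : Fin N => ProbabilityTheory.cond μ A)) ^ 2
      ≤ α * ((∫ ω, Ghat ω ^ 2 ∂(Measure.pi fun _ : Fin N => μ))
        - (∫ ω, Ghat ω ∂(Measure.pi fun _ : Fin N => μ)) ^ 2) := by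
  obtain rfl : Ghat = _ := funext hGhat
  have hμA_real : (μ A).toReal = α := by rw [hμA, ENNReal.toReal_ofReal hα0.le]
  have hμA_ne : μ A ≠ 0 := by rw [hμA]; exact (ENNReal.ofReal_pos.2 hα0).ne'
  have : IsProbabilityMeasure μ[|A] := cond_isProbabilityMeasure hμA_ne
  have hscale : ∀ s, α * ((α * N)⁻¹ * s) = (N : ℝ)⁻¹ * s := fun s => by
    rw [mul_inv, ← mul_assoc, ← mul_assoc, mul_inv_cancel₀ hα0.ne', one_mul]
  simp_rw [hscale]
  have hcond := variance_indicator_cond_le hA hμA_ne hg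
  rw [hμA_real] at hcond
  rw [integral_sq_sub_sq_integral_const_mul_sum_pi _ (hg.indicator hA),
    integral_sq_sub_sq_integral_const_mul_sum_pi _ ((hg.indicator hA).cond hμA_ne),
    Fintype.card_fin]
  calc _ ≤ (N : ℝ)⁻¹ ^ 2 * N * (α⁻¹ * Var[A.indicator g; μ]) := by gcongr
    _ = _ := by field_simp

/-- Proposition 1 for `N` i.i.d. samples (variance): for a probability measure `μ`,
a measurable set `A` with `μ A = α`, `0 < α ≤ 1`, a square-integrable `g`, and the batch
estimator `Ĝ ω = (α N)⁻¹ ∑ i, 1_A(ω i) * g (ω i)` on `Ω^N`, the variance of `α * Ĝ`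
under the `N`-fold product of the conditional measure `μ(·|A)` is at most `α` times the
variance of `Ĝ` under the `N`-fold product of `μ`, where the variance of `h` under a
probability measure `ν` is `∫ h² dν - (∫ h dν)²`. -/
theorem tail_sampling_variance_reduction_batch {Ω : Type*} [MeasurableSpace Ω]
    (μ : Measure Ω) [IsProbabilityMeasure μ]
    (A : Set Ω) (hA : MeasurableSet A) (α : ℝ) (hα0 : 0 < α) (hα1 : α ≤ 1)
    (hμA : μ A = ENNReal.ofReal α)
    (g : Ω → ℝ) (hg : MemLp g 2 μ)
    (N : ℕ) (hN : 0 < N)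
    (Ghat : (Fin N → Ω) → ℝ)
    (hGhat : ∀ ω, Ghat ω = (α * (N : ℝ))⁻¹ * ∑ i, Set.indicator A g (ω i)) :
    (∫ ω, (α * Ghat ω) ^ 2 ∂(Measure.pi fun _ : Fin N => ProbabilityTheory.cond μ A))
        - (∫ ω, α * Ghat ω ∂(Measure.pi fun _ : Fin N => ProbabilityTheory.cond μ A)) ^ 2
      ≤ α * ((∫ ω, Ghat ω ^ 2 ∂(Measure.pi fun _ : Fin N => μ))
        - (∫ ω, Ghat ω ∂(Measure.pi fun _ : Fin N => μ)) ^ 2) :=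
  tail_sampling_variance_reduction_batch_general μ A hA α hα0 hμA g hg N Ghat hGhat
end
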